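/- arXiv:math/0611432 — 2 statements merged into one kernel-verified Lean document; each statement's English description precedes it below -/
import Mathlib

section
/- Let α ∈ (1,2), assume ν̄(x) > 0 for all x > 0, and assume ν̄ is regularly varying at infinity with index −α, i.e. for every u > 0, ν̄(tu)/ν̄(t) → u^{−α} as t → ∞. Then ∫_0^∞ (1 − e^{−yu}) ν̄(u) du ~ (Γ(2−α)/(α−1)) · y^{−1} ν̄(1/y) as y → 0⁺, i.e. the ratio of the two sides tends to 1. -/
/-!
Substituting `u = v / y`, the ratio becomes `∫₀^∞ (1 - e^{-v}) ν̄(v/y) / ν̄(1/y) dv` divided by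
`Γ(2-α)/(α-1)`. Regular variation gives the pointwise limit `(1 - e^{-v}) v^{-α}`, whose integral
is `Γ(2-α)/(α-1)` after one integration by parts, so it remains to dominate the integrand.
Fix `1 < β < α < γ < 2`. Comparing `ν̄` at dyadic points `2^k t` yields Potter's bounds
`ν̄(tv) ≤ 2^β v^{-β} ν̄(t)` for `v ≥ 1` and `ν̄(tv) ≤ K v^{-γ} ν̄(t)` for `v ≤ 1` once `t` is large,
where Markov's inequality `x ν̄(x) ≤ ∫ |l| dν` covers the points `tv` below the threshold of
regular variation. As `1 - e^{-v} ≤ min v 1`, this gives the integrable majorant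
`K v^{1-γ}` on `(0, 1]` and `2^β v^{-β}` on `(1, ∞)`.
-/

open MeasureTheory Filter Set Real Topology

lemma one_sub_exp_neg_nonneg {v : ℝ} (hv : 0 ≤ v) : 0 ≤ 1 - exp (-v) := by
  linarith [exp_le_one_iff.mpr (neg_nonpos.mpr hv)]

lemma one_sub_exp_neg_le_self (v : ℝ) : 1 - exp (-v) ≤ v := by
  linarith [one_sub_le_exp_neg v]

lemma one_sub_exp_neg_le_one (v : ℝ) : 1 - exp (-v) ≤ 1 := by
  linarith [exp_pos (-v)]

lemma integrableOn_Ioi_ite_rpow {a b : ℝ} (ha : -1 < a) (hb : b < -1) (C D : ℝ) :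
    IntegrableOn (fun v : ℝ => if v ≤ 1 then C * v ^ a else D * v ^ b) (Ioi 0) := by
  rw [← Ioc_union_Ioi_eq_Ioi zero_le_one, integrableOn_union]
  constructor
  · have h := (intervalIntegral.intervalIntegrable_rpow' ha (a := 0) (b := 1)).const_mul C
    rw [intervalIntegrable_iff_integrableOn_Ioc_of_le zero_le_one] at h
    exact h.congr_fun (fun v hv => (if_pos hv.2).symm) measurableSet_Ioc
  · exact IntegrableOn.congr_fun ((integrableOn_Ioi_rpow_of_lt hb one_pos).const_mul D)
      (fun v hv => (if_neg (not_le.mpr hv)).symm) measurableSet_Ioi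

section GammaIntegral

variable {α : ℝ}

lemma integrableOn_one_sub_exp_neg_mul_rpow (hα1 : 1 < α) (hα2 : α < 2) :
    IntegrableOn (fun v : ℝ => (1 - exp (-v)) * v ^ (-α)) (Ioi 0) := by
  have hcont : ContinuousOn (fun v : ℝ => (1 - exp (-v)) * v ^ (-α)) (Ioi 0) :=
    (by fun_prop : Continuous fun v : ℝ => 1 - exp (-v)).continuousOn.mul
      (continuousOn_id.rpow_const fun v hv => Or.inl (ne_of_gt hv))
  refine (integrableOn_Ioi_ite_rpow (a := 1 - α) (b := -α) (by linarith) (by linarith) 1 1).mono'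
    (hcont.aestronglyMeasurable measurableSet_Ioi) ?_
  filter_upwards [ae_restrict_mem measurableSet_Ioi] with v (hv : 0 < v)
  rw [norm_of_nonneg (mul_nonneg (one_sub_exp_neg_nonneg hv.le) (rpow_nonneg hv.le _))]
  split_ifs with hv1
  · calc (1 - exp (-v)) * v ^ (-α) ≤ v * v ^ (-α) :=
          mul_le_mul_of_nonneg_right (one_sub_exp_neg_le_self v) (rpow_nonneg hv.le _)
      _ = 1 * v ^ (1 - α) := by
          rw [one_mul, sub_eq_add_neg, rpow_add hv, rpow_one]
  · rw [one_mul]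
    exact mul_le_of_le_one_left (rpow_nonneg hv.le _) (one_sub_exp_neg_le_one v)

/-- Integration by parts against `d(v ^ (1 - α) / (1 - α)) = v ^ (-α) dv`; the boundary terms
vanish because `1 - exp (-v) ≤ min v 1` and `1 < α < 2`. -/
lemma integral_one_sub_exp_neg_mul_rpow (hα1 : 1 < α) (hα2 : α < 2) :
    ∫ v in Ioi 0, (1 - exp (-v)) * v ^ (-α) = Gamma (2 - α) / (α - 1) := by
  have hα : (1 : ℝ) - α ≠ 0 := by linarith
  have hu : ∀ x ∈ Ioi (0 : ℝ), HasDerivAt (fun v => 1 - exp (-v)) (exp (-x)) x := fun x _ => by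
    simpa using ((hasDerivAt_exp (-x)).comp x (hasDerivAt_neg x)).const_sub 1
  have hv : ∀ x ∈ Ioi (0 : ℝ), HasDerivAt (fun v => v ^ (1 - α) / (1 - α)) (x ^ (-α)) x :=
    fun x hx => by
      simpa [mul_div_cancel_left₀ _ hα] using
        ((hasDerivAt_rpow_const (p := 1 - α) (Or.inl (ne_of_gt hx))).div_const (1 - α))
  have hgamma : IntegrableOn (fun v => exp (-v) * (v ^ (1 - α) / (1 - α))) (Ioi 0) := by
    refine IntegrableOn.congr_fun
      ((GammaIntegral_convergent (s := 2 - α) (by linarith)).div_const (1 - α))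
      (fun v _ => ?_) measurableSet_Ioi
    rw [show 2 - α - 1 = 1 - α by ring, mul_div_assoc]
  have hbound : ∀ x, 0 < x → |(1 - exp (-x)) * (x ^ (1 - α) / (1 - α))|
      ≤ min x 1 * x ^ (1 - α) / (α - 1) := fun x hx => by
    rw [abs_mul, abs_div, abs_of_nonneg (one_sub_exp_neg_nonneg hx.le),
      abs_of_nonneg (rpow_nonneg hx.le _), abs_of_neg (by linarith : 1 - α < 0), neg_sub,
      ← mul_div_assoc]
    gcongr
    exact le_min (one_sub_exp_neg_le_self x) (one_sub_exp_neg_le_one x)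
  have hzero : Tendsto (fun v => (1 - exp (-v)) * (v ^ (1 - α) / (1 - α))) (𝓝[>] 0) (𝓝 0) := by
    refine squeeze_zero_norm' (a := fun x => x ^ (2 - α) / (α - 1)) ?_ ?_
    · filter_upwards [Ioo_mem_nhdsGT one_pos] with x hx
      refine (hbound x hx.1).trans_eq ?_
      rw [min_eq_left hx.2.le, ← rpow_one_add' hx.1.le (by linarith)]
      ring_nf
    · have := ((continuousAt_rpow_const 0 (2 - α) (Or.inr (by linarith))).tendsto.div_const
        (α - 1)).mono_left (nhdsWithin_le_nhds (s := Ioi 0))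
      rwa [zero_rpow (by linarith), zero_div] at this
  have hinfty : Tendsto (fun v => (1 - exp (-v)) * (v ^ (1 - α) / (1 - α))) atTop (𝓝 0) := by
    refine squeeze_zero_norm' (a := fun x => x ^ (1 - α) / (α - 1)) ?_ ?_
    · filter_upwards [eventually_gt_atTop 1] with x hx
      refine (hbound x (one_pos.trans hx)).trans_eq ?_
      rw [min_eq_right hx.le, one_mul]
    · simpa [show -(α - 1) = 1 - α by ring] using
        (tendsto_rpow_neg_atTop (by linarith : 0 < α - 1)).div_const (α - 1)
  have hibp := integral_Ioi_mul_deriv_eq_deriv_mul hu hv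
    (integrableOn_one_sub_exp_neg_mul_rpow hα1 hα2) hgamma hzero hinfty
  have hG : ∫ v in Ioi 0, exp (-v) * (v ^ (1 - α) / (1 - α)) = Gamma (2 - α) / (1 - α) := by
    simp_rw [← mul_div_assoc, integral_div, Gamma_eq_integral (by linarith : 0 < 2 - α),
      show 2 - α - 1 = 1 - α by ring]
  rw [hibp, hG, show 1 - α = -(α - 1) by ring, div_neg]
  ring

end GammaIntegral

section Dyadic

variable {f : ℝ → ℝ} {T : ℝ}

lemma le_pow_mul_of_forall_two_mul_le (hT : 0 ≤ T) {r : ℝ} (hr : 0 ≤ r)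
    (h : ∀ t, T ≤ t → f (2 * t) ≤ r * f t) (k : ℕ) {t : ℝ} (ht : T ≤ t) :
    f (2 ^ k * t) ≤ r ^ k * f t := by
  induction k with
  | zero => simp
  | succ k ih =>
    calc f (2 ^ (k + 1) * t) = f (2 * (2 ^ k * t)) := by rw [pow_succ', mul_assoc]
      _ ≤ r * f (2 ^ k * t) :=
        h _ (ht.trans (le_mul_of_one_le_left (hT.trans ht) (one_le_pow₀ one_le_two)))
      _ ≤ r * (r ^ k * f t) := mul_le_mul_of_nonneg_left ih hr
      _ = r ^ (k + 1) * f t := by ring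

lemma pow_mul_le_of_forall_le_two_mul (hT : 0 ≤ T) {r : ℝ} (hr : 0 ≤ r)
    (h : ∀ t, T ≤ t → r * f t ≤ f (2 * t)) (k : ℕ) {t : ℝ} (ht : T ≤ t) :
    r ^ k * f t ≤ f (2 ^ k * t) := by
  simpa using le_pow_mul_of_forall_two_mul_le (f := -f) hT hr
    (fun t ht => by simpa using h t ht) k ht

lemma rpow_mul_le_of_forall_two_mul_le (hT : 0 < T) (hf : AntitoneOn f (Ioi 0))
    (hf0 : ∀ x, 0 < x → 0 ≤ f x) {β : ℝ} (hβ : 0 ≤ β)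
    (h : ∀ t, T ≤ t → f (2 * t) ≤ 2 ^ (-β) * f t) {s t : ℝ} (ht : T ≤ t) (hts : t ≤ s) :
    s ^ β * f s ≤ 2 ^ β * (t ^ β * f t) := by
  have ht0 : 0 < t := hT.trans_le ht
  obtain ⟨k, hk, hk'⟩ := exists_nat_pow_near ((one_le_div ht0).mpr hts) one_lt_two
  rw [le_div_iff₀ ht0] at hk
  rw [div_lt_iff₀ ht0] at hk'
  have hfs : f s ≤ (2 ^ (-β)) ^ k * f t :=
    (hf (by simp only [mem_Ioi]; positivity) (ht0.trans_le hts) hk).trans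
      (le_pow_mul_of_forall_two_mul_le hT.le (by positivity) h k ht)
  have hs : s ≤ 2 * 2 ^ k * t := by rw [← pow_succ']; exact hk'.le
  calc s ^ β * f s ≤ (2 * 2 ^ k * t) ^ β * ((2 ^ (-β)) ^ k * f t) :=
        mul_le_mul (rpow_le_rpow (ht0.le.trans hts) hs hβ) hfs (hf0 s (ht0.trans_le hts))
          (by positivity)
    _ = 2 ^ β * (t ^ β * f t) := by
        rw [rpow_pow_comm zero_le_two, rpow_neg (by positivity), mul_rpow (by positivity)
          (by positivity), mul_rpow zero_le_two (by positivity)]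
        field_simp

lemma rpow_mul_le_of_forall_le_two_mul (hT : 0 < T) (hf : AntitoneOn f (Ioi 0))
    (hf0 : ∀ x, 0 < x → 0 ≤ f x) {γ : ℝ} (hγ : 0 ≤ γ)
    (h : ∀ t, T ≤ t → 2 ^ (-γ) * f t ≤ f (2 * t)) {s t : ℝ} (hs : T ≤ s) (hst : s ≤ t) :
    s ^ γ * f s ≤ 2 ^ γ * (t ^ γ * f t) := by
  have hs0 : 0 < s := hT.trans_le hs
  obtain ⟨k, hk, hk'⟩ := exists_nat_pow_near ((one_le_div hs0).mpr hst) one_lt_two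
  rw [le_div_iff₀ hs0] at hk
  rw [div_lt_iff₀ hs0] at hk'
  have hft : (2 ^ (-γ)) ^ (k + 1) * f s ≤ f t :=
    (pow_mul_le_of_forall_le_two_mul hT.le (by positivity) h (k + 1) hs).trans
      (hf (hs0.trans_le hst) (by simp only [mem_Ioi]; positivity) hk'.le)
  calc s ^ γ * f s = (2 * (2 ^ k * s)) ^ γ * ((2 ^ (-γ)) ^ (k + 1) * f s) := by
        rw [rpow_pow_comm zero_le_two, rpow_neg (by positivity), mul_rpow zero_le_two
          (by positivity), mul_rpow (by positivity) hs0.le, pow_succ', mul_rpow zero_le_two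
          (by positivity)]
        field_simp
    _ ≤ (2 * t) ^ γ * f t :=
        mul_le_mul (rpow_le_rpow (by positivity) (by gcongr) hγ) hft
          (mul_nonneg (by positivity) (hf0 s hs0)) (rpow_nonneg (by linarith) _)
    _ = 2 ^ γ * (t ^ γ * f t) := by rw [mul_rpow zero_le_two (hs0.le.trans hst)]; ring

lemma exists_rpow_mul_le_of_forall_le_two_mul (hT : 0 < T) (hf : AntitoneOn f (Ioi 0))
    (hpos : ∀ x, 0 < x → 0 < f x) {M : ℝ} (hM : ∀ x, 0 < x → x * f x ≤ M) {γ : ℝ} (hγ : 1 ≤ γ)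
    (h : ∀ t, T ≤ t → 2 ^ (-γ) * f t ≤ f (2 * t)) :
    ∃ K, ∀ s t, 0 < s → s ≤ t → T ≤ t → s ^ γ * f s ≤ K * (t ^ γ * f t) := by
  have hf0 : ∀ x, 0 < x → 0 ≤ f x := fun x hx => (hpos x hx).le
  have hpotter {s t : ℝ} (hs : T ≤ s) (hst : s ≤ t) : s ^ γ * f s ≤ 2 ^ γ * (t ^ γ * f t) :=
    rpow_mul_le_of_forall_le_two_mul hT hf hf0 (by linarith) h hs hst
  have hfT := hpos T hT
  have hM0 : 0 ≤ M := (mul_pos hT hfT).le.trans (hM T hT)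
  refine ⟨2 ^ γ * max 1 (M / (T * f T)), fun s t hs hst ht => ?_⟩
  have hgt : 0 ≤ t ^ γ * f t :=
    mul_nonneg (rpow_nonneg (hs.le.trans hst) _) (hf0 t (hs.trans_le hst))
  rcases le_total T s with hTs | hsT
  · calc s ^ γ * f s ≤ 2 ^ γ * (t ^ γ * f t) := hpotter hTs hst
      _ ≤ 2 ^ γ * max 1 (M / (T * f T)) * (t ^ γ * f t) := by
        gcongr
        exact le_mul_of_one_le_right (by positivity) (le_max_left _ _)
  · calc s ^ γ * f s = s ^ (γ - 1) * (s * f s) := by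
          rw [← mul_assoc, ← rpow_add_one hs.ne', sub_add_cancel]
      _ ≤ T ^ (γ - 1) * M :=
          mul_le_mul (rpow_le_rpow hs.le hsT (by linarith)) (hM s hs)
            (mul_nonneg hs.le (hf0 s hs)) (by positivity)
      _ = M / (T * f T) * (T ^ γ * f T) := by
          rw [rpow_sub_one hT.ne']; field_simp
      _ ≤ M / (T * f T) * (2 ^ γ * (t ^ γ * f t)) :=
          mul_le_mul_of_nonneg_left (hpotter le_rfl ht) (div_nonneg hM0 (by positivity))
      _ ≤ 2 ^ γ * max 1 (M / (T * f T)) * (t ^ γ * f t) := by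
          rw [mul_left_comm, ← mul_assoc]
          gcongr
          exact le_max_right _ _

end Dyadic

def IsRegularlyVaryingAtTop (f : ℝ → ℝ) (ρ : ℝ) : Prop :=
  ∀ u : ℝ, 0 < u → Tendsto (fun t => f (t * u) / f t) atTop (𝓝 (u ^ ρ))

namespace IsRegularlyVaryingAtTop

variable {f : ℝ → ℝ} {ρ : ℝ}

lemma exists_forall_le_two_mul_le (hf : IsRegularlyVaryingAtTop f ρ)
    (hpos : ∀ x, 0 < x → 0 < f x) {σ τ : ℝ} (hτ : τ < ρ) (hσ : ρ < σ) :
    ∃ T, 0 < T ∧ ∀ t, T ≤ t → 2 ^ τ * f t ≤ f (2 * t) ∧ f (2 * t) ≤ 2 ^ σ * f t := by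
  have hmem : Ioo ((2 : ℝ) ^ τ) (2 ^ σ) ∈ 𝓝 ((2 : ℝ) ^ ρ) :=
    Ioo_mem_nhds (rpow_lt_rpow_of_exponent_lt one_lt_two hτ)
      (rpow_lt_rpow_of_exponent_lt one_lt_two hσ)
  obtain ⟨T, hT⟩ := eventually_atTop.mp
    (((hf 2 two_pos).eventually_mem hmem).and (eventually_gt_atTop 0))
  refine ⟨max T 1, one_pos.trans_le (le_max_right _ _), fun t ht => ?_⟩
  obtain ⟨⟨hlow, hup⟩, ht0⟩ := hT t ((le_max_left _ _).trans ht)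
  rw [mul_comm 2 t]
  exact ⟨((lt_div_iff₀ (hpos t ht0)).mp hlow).le, ((div_lt_iff₀ (hpos t ht0)).mp hup).le⟩

end IsRegularlyVaryingAtTop

section Karamata

variable {f : ℝ → ℝ} {α M : ℝ}

lemma le_mul_rpow_neg_mul_of_rpow_mul_le {t v p C : ℝ} (ht : 0 < t) (hv : 0 < v)
    (h : (t * v) ^ p * f (t * v) ≤ C * (t ^ p * f t)) : f (t * v) ≤ C * v ^ (-p) * f t := by
  rw [mul_rpow ht.le hv.le, mul_assoc, mul_left_comm C] at h
  have h' := le_of_mul_le_mul_left h (rpow_pos_of_pos ht p)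
  calc f (t * v) = v ^ (-p) * (v ^ p * f (t * v)) := by
        rw [← mul_assoc, ← rpow_add hv, neg_add_cancel, rpow_zero, one_mul]
    _ ≤ v ^ (-p) * (C * f t) := mul_le_mul_of_nonneg_left h' (rpow_nonneg hv.le _)
    _ = C * v ^ (-p) * f t := by ring

lemma exists_integrableOn_bound_of_isRegularlyVaryingAtTop (hf : AntitoneOn f (Ioi 0))
    (hpos : ∀ x, 0 < x → 0 < f x) (hM : ∀ x, 0 < x → x * f x ≤ M) (hα1 : 1 < α) (hα2 : α < 2)
    (hrv : IsRegularlyVaryingAtTop f (-α)) :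
    ∃ B : ℝ → ℝ, IntegrableOn B (Ioi 0) ∧ ∀ᶠ y in 𝓝[>] 0, ∀ v, 0 < v →
      (1 - exp (-v)) * f (y⁻¹ * v) / f y⁻¹ ≤ B v := by
  obtain ⟨β, γ, hβ, hβα, hαγ, hγ⟩ : ∃ β γ : ℝ, 1 < β ∧ β < α ∧ α < γ ∧ γ < 2 :=
    ⟨(1 + α) / 2, (α + 2) / 2, by linarith, by linarith, by linarith, by linarith⟩
  have hf0 : ∀ x, 0 < x → 0 ≤ f x := fun x hx => (hpos x hx).le
  obtain ⟨T, hT, hTf⟩ := hrv.exists_forall_le_two_mul_le hpos (τ := -γ) (σ := -β)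
    (by linarith) (by linarith)
  obtain ⟨K, hK⟩ := exists_rpow_mul_le_of_forall_le_two_mul hT hf hpos hM (by linarith : 1 ≤ γ)
    fun t ht => (hTf t ht).1
  refine ⟨fun v => if v ≤ 1 then K * v ^ (1 - γ) else 2 ^ β * v ^ (-β),
    integrableOn_Ioi_ite_rpow (by linarith) (by linarith) _ _, ?_⟩
  filter_upwards [tendsto_inv_nhdsGT_zero.eventually_ge_atTop T] with y (hy : T ≤ y⁻¹) v hv
  set t := y⁻¹
  have ht0 : 0 < t := hT.trans_le hy
  have hft := hpos t ht0
  have hftv := hf0 (t * v) (by positivity)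
  rw [div_le_iff₀ hft]
  split_ifs with hv1
  · have hbound := le_mul_rpow_neg_mul_of_rpow_mul_le ht0 hv
      (hK (t * v) t (by positivity) (mul_le_of_le_one_right ht0.le hv1) hy)
    calc (1 - exp (-v)) * f (t * v) ≤ v * (K * v ^ (-γ) * f t) :=
          mul_le_mul (one_sub_exp_neg_le_self v) hbound hftv hv.le
      _ = K * v ^ (1 - γ) * f t := by
          rw [sub_eq_add_neg, rpow_add hv, rpow_one]; ring
  · have hbound := le_mul_rpow_neg_mul_of_rpow_mul_le ht0 hv
      (rpow_mul_le_of_forall_two_mul_le hT hf hf0 (by linarith) (fun t ht => (hTf t ht).2) hy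
        (le_mul_of_one_le_right ht0.le (not_le.mp hv1).le))
    exact mul_le_of_le_one_left hftv (one_sub_exp_neg_le_one v) |>.trans hbound

theorem tendsto_integral_one_sub_exp_neg_mul_of_isRegularlyVaryingAtTop (hmeas : Measurable f)
    (hf : AntitoneOn f (Ioi 0)) (hpos : ∀ x, 0 < x → 0 < f x) (hM : ∀ x, 0 < x → x * f x ≤ M)
    (hα1 : 1 < α) (hα2 : α < 2) (hrv : IsRegularlyVaryingAtTop f (-α)) :
    Tendsto (fun y => ∫ v in Ioi 0, (1 - exp (-v)) * f (y⁻¹ * v) / f y⁻¹) (𝓝[>] 0)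
      (𝓝 (Gamma (2 - α) / (α - 1))) := by
  obtain ⟨B, hBint, hB⟩ :=
    exists_integrableOn_bound_of_isRegularlyVaryingAtTop hf hpos hM hα1 hα2 hrv
  rw [← integral_one_sub_exp_neg_mul_rpow hα1 hα2]
  refine tendsto_integral_filter_of_dominated_convergence B
    (Eventually.of_forall fun y => by fun_prop) ?_ hBint ?_
  · filter_upwards [hB, self_mem_nhdsWithin] with y hy (hy0 : 0 < y)
    filter_upwards [ae_restrict_mem measurableSet_Ioi] with v (hv : 0 < v)
    refine (norm_of_nonneg ?_).trans_le (hy v hv)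
    exact div_nonneg (mul_nonneg (one_sub_exp_neg_nonneg hv.le) (hpos _ (by positivity)).le)
      (hpos _ (by positivity)).le
  · filter_upwards [ae_restrict_mem measurableSet_Ioi] with v (hv : 0 < v)
    simpa only [mul_div_assoc, Function.comp_def] using
      ((hrv v hv).comp tendsto_inv_nhdsGT_zero).const_mul (1 - exp (-v))

end Karamata

lemma measurable_measure_Ioi_toReal (ν : Measure ℝ) : Measurable fun x => (ν (Ioi x)).toReal :=
  ENNReal.measurable_toReal.comp (Antitone.measurable fun _ _ h => measure_mono (Ioi_subset_Ioi h))

section Tail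

variable {ν : Measure ℝ}

lemma measure_Ioi_le_measure_le_abs (x : ℝ) : ν (Ioi x) ≤ ν {l | x ≤ ‖l‖} :=
  measure_mono fun l (hl : x < l) => hl.le.trans (le_abs_self l)

lemma antitoneOn_measure_Ioi_toReal (hint : Integrable (fun l : ℝ => l) ν) :
    AntitoneOn (fun x => (ν (Ioi x)).toReal) (Ioi 0) := fun x hx _ _ hxx' =>
  ENNReal.toReal_mono (ne_top_of_le_ne_top (hint.measure_norm_ge_lt_top hx).ne
    (measure_Ioi_le_measure_le_abs x)) (measure_mono (Ioi_subset_Ioi hxx'))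

lemma mul_measure_Ioi_toReal_le_integral_abs (hint : Integrable (fun l : ℝ => l) ν) {x : ℝ}
    (hx : 0 < x) : x * (ν (Ioi x)).toReal ≤ ∫ l, |l| ∂ν :=
  (mul_le_mul_of_nonneg_left (ENNReal.toReal_mono (hint.measure_norm_ge_lt_top hx).ne
    (measure_Ioi_le_measure_le_abs x)) hx.le).trans
    (mul_meas_ge_le_integral_of_nonneg (ae_of_all _ fun l => abs_nonneg l) hint.abs x)

end Tail

lemma integral_Ioi_one_sub_exp_neg_mul_eq (g : ℝ → ℝ) {y : ℝ} (hy : 0 < y) :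
    ∫ u in Ioi 0, (1 - exp (-(y * u))) * g u
      = y⁻¹ * ∫ v in Ioi 0, (1 - exp (-v)) * g (y⁻¹ * v) := by
  have h := integral_comp_mul_left_Ioi (fun u => (1 - exp (-(y * u))) * g u) 0 (inv_pos.2 hy)
  simp only [mul_inv_cancel_left₀ hy.ne', mul_zero, inv_inv, smul_eq_mul] at h
  rw [h, ← mul_assoc, inv_mul_cancel₀ hy.ne', one_mul]

theorem tail_integral_asymptotic_regularly_varying_general
    (ν : Measure ℝ)
    (hint : Integrable (fun l : ℝ => l) ν)
    (α : ℝ) (hα1 : 1 < α) (hα2 : α < 2)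
    (hpos : ∀ x : ℝ, 0 < x → 0 < (ν (Set.Ioi x)).toReal)
    (hrv : ∀ u : ℝ, 0 < u →
      Tendsto (fun t : ℝ => (ν (Set.Ioi (t * u))).toReal / (ν (Set.Ioi t)).toReal)
        atTop (nhds (u ^ (-α)))) :
    Tendsto
      (fun y : ℝ =>
        (∫ u in Set.Ioi (0 : ℝ),
            (1 - Real.exp (-(y * u))) * (ν (Set.Ioi u)).toReal) /
          ((Real.Gamma (2 - α) / (α - 1)) * y⁻¹ * (ν (Set.Ioi (1 / y))).toReal))
      (nhdsWithin 0 (Set.Ioi 0)) (nhds 1) := by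
  have hC : Gamma (2 - α) / (α - 1) ≠ 0 :=
    (div_pos (Gamma_pos_of_pos (by linarith)) (by linarith)).ne'
  have hlim := (tendsto_integral_one_sub_exp_neg_mul_of_isRegularlyVaryingAtTop
    (measurable_measure_Ioi_toReal ν) (antitoneOn_measure_Ioi_toReal hint) hpos
    (fun x hx => mul_measure_Ioi_toReal_le_integral_abs hint hx) hα1 hα2 hrv).div_const
    (Gamma (2 - α) / (α - 1))
  rw [div_self hC] at hlim
  refine hlim.congr' (eventually_mem_nhdsWithin.mono fun y (hy : 0 < y) => ?_)
  dsimp only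
  rw [integral_Ioi_one_sub_exp_neg_mul_eq _ hy, integral_div, one_div]
  field_simp [(hpos y⁻¹ (inv_pos.2 hy)).ne']

/-- Let `ν` be a measure on `(0,∞)` with finite, positive mean, whose tail
`ν̄(x) = ν((x,∞))` is positive and regularly varying at infinity with index `-α`,
`α ∈ (1,2)`. Then `∫_0^∞ (1 - e^{-y u}) ν̄(u) du ~ (Γ(2-α)/(α-1)) y⁻¹ ν̄(1/y)` as
`y → 0⁺`, i.e. the ratio of the two sides tends to `1`. -/
theorem tail_integral_asymptotic_regularly_varying
    (ν : Measure ℝ) (hν0 : ν (Set.Iic 0) = 0)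
    (hint : Integrable (fun l : ℝ => l) ν)
    (hmpos : 0 < ∫ l, l ∂ν)
    (α : ℝ) (hα1 : 1 < α) (hα2 : α < 2)
    (hpos : ∀ x : ℝ, 0 < x → 0 < (ν (Set.Ioi x)).toReal)
    (hrv : ∀ u : ℝ, 0 < u →
      Tendsto (fun t : ℝ => (ν (Set.Ioi (t * u))).toReal / (ν (Set.Ioi t)).toReal)
        atTop (nhds (u ^ (-α)))) :
    Tendsto
      (fun y : ℝ =>
        (∫ u in Set.Ioi (0 : ℝ),
            (1 - Real.exp (-(y * u))) * (ν (Set.Ioi u)).toReal) /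
          ((Real.Gamma (2 - α) / (α - 1)) * y⁻¹ * (ν (Set.Ioi (1 / y))).toReal))
      (nhdsWithin 0 (Set.Ioi 0)) (nhds 1) :=
  tail_integral_asymptotic_regularly_varying_general ν hint α hα1 hα2 hpos hrv
end

section
/- Let α ∈ (1,2) and C > 0, and assume ν̄(x) ~ C x^{−α} as x → ∞. Then for every y ≥ 0, lim_{t→(1/m)⁻} (1−mt)^{−α/(α−1)} Ψ^{(t)}((1−mt)^{1/(α−1)} y) = −y − (C Γ(2−α)/(m(α−1))) y^α. -/
open MeasureTheory Filter

/-- The Laplace exponent `Ψ^(t)(ρ) = -ρ + t ∫_0^∞ (1 - e^{-ρ l}) ν(dl)`. -/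
noncomputable def Psi (ν : Measure ℝ) (t ρ : ℝ) : ℝ :=
  -ρ + t * ∫ l, (1 - Real.exp (-(ρ * l))) ∂ν

/-!
Write `φ(ρ) = ∫ (e^{-ρl} - 1 + ρl) ν(dl)` (`compensatedLaplace ν ρ`), so that
`Ψ^(t)(ρ) = -(1 - m t) ρ - t φ(ρ)`. With `ε = 1 - m t` and `s = ε^{1/(α-1)}` the rescaled exponent equals `-y - t φ(s y) / s^α`, and the
theorem reduces to the Abelian asymptotics `φ(ρ) ~ (C Γ(2-α)/(α-1)) ρ^α` as `ρ → 0+`.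
By the layer cake formula and the substitution `u = ρ x`,
`φ(ρ) / ρ^α = ∫_0^∞ (1 - e^{-u}) u^{-α} g(u/ρ) du` with `g(x) = x^α ν̄(x)`. Since `g` is bounded on
`(0, ∞)` and tends to `C`, dominated convergence gives the limit `C ∫_0^∞ (1 - e^{-u}) u^{-α} du`.
-/

open Set Real Topology

lemma one_sub_exp_neg_nonneg_s10 {x : ℝ} (hx : 0 ≤ x) : 0 ≤ 1 - exp (-x) :=
  sub_nonneg.2 (exp_le_one_iff.2 (neg_nonpos.2 hx))

lemma norm_one_sub_exp_neg_le_self {x : ℝ} (hx : 0 ≤ x) : ‖1 - exp (-x)‖ ≤ x := by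
  rw [norm_of_nonneg (one_sub_exp_neg_nonneg_s10 hx)]
  linarith [one_sub_le_exp_neg x]

lemma norm_one_sub_exp_neg_le_one {x : ℝ} (hx : 0 ≤ x) : ‖1 - exp (-x)‖ ≤ 1 := by
  rw [norm_of_nonneg (one_sub_exp_neg_nonneg_s10 hx)]
  linarith [exp_pos (-x)]

lemma integrableOn_one_sub_exp_neg_mul_rpow_neg {α : ℝ} (hα1 : 1 < α) (hα2 : α < 2) :
    IntegrableOn (fun u : ℝ => (1 - exp (-u)) * u ^ (-α)) (Ioi 0) := by
  have hmeas : AEStronglyMeasurable (fun u : ℝ => (1 - exp (-u)) * u ^ (-α)) := by fun_prop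
  rw [← Ioc_union_Ioi_eq_Ioi zero_le_one]
  refine IntegrableOn.union ?_ ?_
  · refine ((intervalIntegral.intervalIntegrable_rpow' (by linarith : -1 < 1 - α)).1).mono'
      hmeas.restrict ((ae_restrict_iff' measurableSet_Ioc).2 (ae_of_all _ fun u hu => ?_))
    have hpow : u ^ (1 - α) = u * u ^ (-α) := by rw [sub_eq_add_neg, rpow_add hu.1, rpow_one]
    rw [norm_mul, norm_of_nonneg (rpow_nonneg hu.1.le _), hpow]
    exact mul_le_mul_of_nonneg_right (norm_one_sub_exp_neg_le_self hu.1.le) (rpow_nonneg hu.1.le _)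
  · refine (integrableOn_Ioi_rpow_of_lt (by linarith : -α < -1) one_pos).mono'
      hmeas.restrict ((ae_restrict_iff' measurableSet_Ioi).2 (ae_of_all _ fun u hu => ?_))
    have hu : (0 : ℝ) < u := one_pos.trans hu
    rw [norm_mul, norm_of_nonneg (rpow_nonneg hu.le _)]
    exact mul_le_of_le_one_left (by positivity) (norm_one_sub_exp_neg_le_one hu.le)

/-- Integration by parts against `d(u^{1-α})`, turning the kernel into the Gamma integral. -/
lemma integral_one_sub_exp_neg_mul_rpow_neg {α : ℝ} (hα1 : 1 < α) (hα2 : α < 2) :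
    ∫ u in Ioi 0, (1 - exp (-u)) * u ^ (-α) = Gamma (2 - α) / (α - 1) := by
  set F : ℝ → ℝ := fun u => (1 - exp (-u)) * u ^ (1 - α)
  have hF0 : F 0 = 0 := by simp [F]
  have hderiv : ∀ u ∈ Ioi (0 : ℝ), HasDerivAt F
      (exp (-u) * u ^ (2 - α - 1) + (1 - α) * ((1 - exp (-u)) * u ^ (-α))) u := by
    intro u hu
    have h := ((hasDerivAt_neg u).exp.const_sub 1).mul
      (hasDerivAt_rpow_const (p := 1 - α) (Or.inl (ne_of_gt hu)))
    refine h.congr_deriv ?_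
    rw [show 2 - α - 1 = 1 - α by ring, show 1 - α - 1 = -α by ring]
    ring
  have hGamma := GammaIntegral_convergent (by linarith : 0 < 2 - α)
  have hkernel := integrableOn_one_sub_exp_neg_mul_rpow_neg hα1 hα2
  have hcont : ContinuousWithinAt F (Ici 0) 0 := by
    have hpow : Tendsto (fun u : ℝ => u ^ (2 - α)) (𝓝[≥] 0) (𝓝 0) := by
      simpa [zero_rpow (by linarith : 2 - α ≠ 0)] using
        (continuousAt_rpow_const 0 (2 - α) (Or.inr (by linarith))).continuousWithinAt.tendsto
    rw [ContinuousWithinAt, hF0]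
    refine squeeze_zero' ?_ ?_ hpow
    all_goals filter_upwards [self_mem_nhdsWithin] with u (hu : 0 ≤ u)
    · exact mul_nonneg (one_sub_exp_neg_nonneg_s10 hu) (rpow_nonneg hu _)
    · have hsplit : u ^ (2 - α) = u * u ^ (1 - α) := by
        rw [← rpow_one_add' hu (by linarith)]
        ring_nf
      rw [hsplit]
      exact mul_le_mul_of_nonneg_right (by linarith [one_sub_le_exp_neg u]) (rpow_nonneg hu _)
  have hlim : Tendsto F atTop (𝓝 0) := by
    have := ((tendsto_const_nhds (x := (1 : ℝ))).sub tendsto_exp_neg_atTop_nhds_zero).mul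
      (tendsto_rpow_neg_atTop (by linarith : 0 < α - 1))
    simpa [F, show -(α - 1) = 1 - α by ring] using this
  have key := integral_Ioi_of_hasDerivAt_of_tendsto hcont hderiv
    (hGamma.add (hkernel.const_mul _)) hlim
  rw [integral_add hGamma (hkernel.const_mul _), integral_const_mul,
    ← Gamma_eq_integral (by linarith), hF0] at key
  rw [eq_div_iff (by linarith)]
  linear_combination -key

lemma tendsto_setIntegral_mul_comp_div_nhdsGT_zero {k g : ℝ → ℝ} {K C : ℝ}
    (hk : IntegrableOn k (Ioi 0)) (hg : Measurable g) (hgK : ∀ x > 0, ‖g x‖ ≤ K)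
    (hgC : Tendsto g atTop (𝓝 C)) :
    Tendsto (fun ρ => ∫ u in Ioi 0, k u * g (u / ρ)) (𝓝[>] 0)
      (𝓝 ((∫ u in Ioi 0, k u) * C)) := by
  rw [← integral_mul_const]
  refine tendsto_integral_filter_of_dominated_convergence (fun u => ‖k u‖ * K)
    (Eventually.of_forall fun ρ => hk.aestronglyMeasurable.mul
      (hg.comp (measurable_id.div_const ρ)).aestronglyMeasurable) ?_ (hk.norm.mul_const K) ?_
  · filter_upwards [self_mem_nhdsWithin] with ρ (hρ : 0 < ρ)
    refine (ae_restrict_iff' measurableSet_Ioi).2 (ae_of_all _ fun u (hu : 0 < u) => ?_)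
    rw [norm_mul]
    exact mul_le_mul_of_nonneg_left (hgK _ (div_pos hu hρ)) (norm_nonneg _)
  · refine (ae_restrict_iff' measurableSet_Ioi).2 (ae_of_all _ fun u (hu : 0 < u) => ?_)
    have hdiv : Tendsto (fun ρ : ℝ => u / ρ) (𝓝[>] 0) atTop := by
      simpa only [div_eq_mul_inv] using tendsto_inv_nhdsGT_zero.const_mul_atTop hu
    exact (hgC.comp hdiv).const_mul (k u)

lemma tendsto_rpow_nhdsGT_zero {p : ℝ} (hp : 0 < p) :
    Tendsto (fun x : ℝ => x ^ p) (𝓝[>] 0) (𝓝[>] 0) :=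
  tendsto_nhdsWithin_of_tendsto_nhds_of_eventually_within _
    (by simpa [zero_rpow hp.ne'] using
      ((continuousAt_rpow_const 0 p (Or.inr hp.le)).tendsto.mono_left nhdsWithin_le_nhds))
    (by filter_upwards [self_mem_nhdsWithin] with x (hx : 0 < x) using rpow_pos_of_pos hx p)

lemma intervalIntegral_mul_one_sub_exp_neg_mul (ρ l : ℝ) :
    ∫ x in 0..l, ρ * (1 - exp (-(ρ * x))) = exp (-(ρ * l)) - 1 + ρ * l := by
  have hderiv : ∀ x ∈ uIcc 0 l,
      HasDerivAt (fun x => exp (-(ρ * x)) + ρ * x) (ρ * (1 - exp (-(ρ * x)))) x := fun x _ =>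
    (((hasDerivAt_id x).const_mul ρ).neg.exp.add ((hasDerivAt_id x).const_mul ρ)).congr_deriv
      (by simp only [id, mul_one, Pi.neg_apply]; ring)
  rw [intervalIntegral.integral_eq_sub_of_hasDerivAt hderiv
    (by apply Continuous.intervalIntegrable; fun_prop)]
  simp only [mul_zero, neg_zero, exp_zero, add_zero]
  ring

noncomputable def compensatedLaplace (ν : Measure ℝ) (ρ : ℝ) : ℝ :=
  ∫ l, (exp (-(ρ * l)) - 1 + ρ * l) ∂ν

lemma measurable_measure_Ioi (ν : Measure ℝ) : Measurable fun x => ν (Ioi x) :=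
  Antitone.measurable fun _ _ hab => measure_mono (Ioi_subset_Ioi hab)

section Tail

variable {ν : Measure ℝ}

lemma ae_pos_of_measure_Iic_zero (hν0 : ν (Iic 0) = 0) : ∀ᵐ l ∂ν, 0 < l :=
  (measure_eq_zero_iff_ae_notMem.1 hν0).mono fun _ hl => not_le.1 hl

lemma measure_Ioi_ne_top_of_integrable_id (hint : Integrable (fun l : ℝ => l) ν) {x : ℝ}
    (hx : 0 < x) : ν (Ioi x) ≠ ⊤ :=
  ((measure_mono fun _ (hl : x < _) => hl.le).trans_lt (hint.measure_ge_lt_top hx)).ne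

lemma measure_Ioi_toReal_le_integral_div (hν0 : ν (Iic 0) = 0)
    (hint : Integrable (fun l : ℝ => l) ν) {x : ℝ} (hx : 0 < x) :
    (ν (Ioi x)).toReal ≤ (∫ l, l ∂ν) / x := by
  rw [le_div_iff₀ hx, mul_comm]
  calc x * (ν (Ioi x)).toReal ≤ x * ν.real {l | x ≤ l} := by
        gcongr
        exact measureReal_mono (fun _ (hl : x < _) => hl.le) (hint.measure_ge_lt_top hx).ne
    _ ≤ ∫ l, l ∂ν := mul_meas_ge_le_integral_of_nonneg
        ((ae_pos_of_measure_Iic_zero hν0).mono fun _ hl => hl.le) hint x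

/-- Markov's inequality bounds `x ^ α ν̄(x)` near `0`, the tail asymptotics near `∞`. -/
lemma exists_rpow_mul_measure_Ioi_le (hν0 : ν (Iic 0) = 0)
    (hint : Integrable (fun l : ℝ => l) ν) {α C : ℝ} (hα : 1 ≤ α)
    (htail : Tendsto (fun x : ℝ => x ^ α * (ν (Ioi x)).toReal) atTop (𝓝 C)) :
    ∃ K, ∀ x > 0, x ^ α * (ν (Ioi x)).toReal ≤ K := by
  obtain ⟨X, hX⟩ := eventually_atTop.1 (htail.eventually (eventually_le_nhds (lt_add_one C)))
  have hm : 0 ≤ ∫ l, l ∂ν :=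
    integral_nonneg_of_ae ((ae_pos_of_measure_Iic_zero hν0).mono fun _ hl => hl.le)
  refine ⟨max (C + 1) ((∫ l, l ∂ν) * X ^ (α - 1)), fun x hx => ?_⟩
  rcases le_total X x with hXx | hxX
  · exact (hX x hXx).trans (le_max_left _ _)
  · refine le_max_of_le_right ?_
    calc x ^ α * (ν (Ioi x)).toReal ≤ x ^ α * ((∫ l, l ∂ν) / x) := by
          gcongr
          exact measure_Ioi_toReal_le_integral_div hν0 hint hx
      _ = (∫ l, l ∂ν) * x ^ (α - 1) := by
          rw [rpow_sub_one hx.ne']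
          ring
      _ ≤ (∫ l, l ∂ν) * X ^ (α - 1) := by gcongr

lemma integrable_one_sub_exp_neg_mul (hν0 : ν (Iic 0) = 0)
    (hint : Integrable (fun l : ℝ => l) ν) {ρ : ℝ} (hρ : 0 ≤ ρ) :
    Integrable (fun l => 1 - exp (-(ρ * l))) ν :=
  (hint.const_mul ρ).mono' (by fun_prop) <| (ae_pos_of_measure_Iic_zero hν0).mono fun l hl =>
    norm_one_sub_exp_neg_le_self (mul_nonneg hρ hl.le)

lemma Psi_eq_neg_sub_compensatedLaplace (hν0 : ν (Iic 0) = 0)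
    (hint : Integrable (fun l : ℝ => l) ν) (t : ℝ) {ρ : ℝ} (hρ : 0 ≤ ρ) :
    Psi ν t ρ = -((1 - (∫ l, l ∂ν) * t) * ρ) - t * compensatedLaplace ν ρ := by
  have hsplit : compensatedLaplace ν ρ
      = ρ * ∫ l, l ∂ν - ∫ l, (1 - exp (-(ρ * l))) ∂ν := by
    rw [compensatedLaplace, ← integral_const_mul,
      ← integral_sub (hint.const_mul ρ) (integrable_one_sub_exp_neg_mul hν0 hint hρ)]
    congr 1 with l
    ring
  rw [Psi, hsplit]
  ring

lemma compensatedLaplace_eq_setIntegral_mul_measure_Ioi (hν0 : ν (Iic 0) = 0)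
    (hint : Integrable (fun l : ℝ => l) ν) {ρ : ℝ} (hρ : 0 ≤ ρ) :
    compensatedLaplace ν ρ = ∫ x in Ioi 0, ρ * (1 - exp (-(ρ * x))) * (ν (Ioi x)).toReal := by
  have hweight : ∀ x > 0, 0 ≤ ρ * (1 - exp (-(ρ * x))) := fun x hx =>
    mul_nonneg hρ (one_sub_exp_neg_nonneg_s10 (mul_nonneg hρ hx.le))
  have hcake := lintegral_comp_eq_lintegral_meas_lt_mul ν (f := fun l => l)
    ((ae_pos_of_measure_Iic_zero hν0).mono fun _ hl => hl.le) aemeasurable_id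
    (fun _ _ => by apply Continuous.intervalIntegrable; fun_prop)
    ((ae_restrict_iff' measurableSet_Ioi).2 (ae_of_all _ hweight))
  simp only [intervalIntegral_mul_one_sub_exp_neg_mul] at hcake
  have hmeas := (measurable_measure_Ioi ν).ennreal_toReal
  rw [compensatedLaplace, integral_eq_lintegral_of_nonneg_ae
    (ae_of_all _ fun l => show 0 ≤ _ by linarith [add_one_le_exp (-(ρ * l))]) (by fun_prop),
    hcake, integral_eq_lintegral_of_nonneg_ae ((ae_restrict_iff' measurableSet_Ioi).2
      (ae_of_all _ fun x hx => mul_nonneg (hweight x hx) ENNReal.toReal_nonneg)) (by fun_prop)]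
  congr 1
  refine setLIntegral_congr_fun measurableSet_Ioi fun x (hx : 0 < x) => ?_
  rw [ENNReal.ofReal_mul (hweight x hx),
    ENNReal.ofReal_toReal (measure_Ioi_ne_top_of_integrable_id hint hx), mul_comm]
  rfl

lemma compensatedLaplace_div_rpow_eq (hν0 : ν (Iic 0) = 0)
    (hint : Integrable (fun l : ℝ => l) ν) (α : ℝ) {ρ : ℝ} (hρ : 0 < ρ) :
    compensatedLaplace ν ρ / ρ ^ α = ∫ u in Ioi 0,
      (1 - exp (-u)) * u ^ (-α) * ((u / ρ) ^ α * (ν (Ioi (u / ρ))).toReal) := by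
  set g : ℝ → ℝ := fun u => (1 - exp (-u)) * (ν (Ioi (u / ρ))).toReal
  have hsubst := integral_comp_mul_left_Ioi g 0 hρ
  rw [mul_zero] at hsubst
  calc compensatedLaplace ν ρ / ρ ^ α = (ρ * ∫ x in Ioi 0, g (ρ * x)) / ρ ^ α := by
        rw [compensatedLaplace_eq_setIntegral_mul_measure_Ioi hν0 hint hρ.le,
          ← integral_const_mul]
        simp only [g, mul_div_cancel_left₀ _ hρ.ne', mul_assoc]
    _ = (∫ u in Ioi 0, g u) / ρ ^ α := by
        rw [hsubst, smul_eq_mul, mul_inv_cancel_left₀ hρ.ne']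
    _ = _ := by
        rw [← integral_div]
        refine setIntegral_congr_fun measurableSet_Ioi fun u (hu : 0 < u) => ?_
        simp only [g, div_rpow hu.le hρ.le, rpow_neg hu.le]
        field_simp

theorem tendsto_compensatedLaplace_div_rpow (hν0 : ν (Iic 0) = 0)
    (hint : Integrable (fun l : ℝ => l) ν) {α C : ℝ} (hα1 : 1 < α) (hα2 : α < 2)
    (htail : Tendsto (fun x : ℝ => x ^ α * (ν (Ioi x)).toReal) atTop (𝓝 C)) :
    Tendsto (fun ρ => compensatedLaplace ν ρ / ρ ^ α) (𝓝[>] 0)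
      (𝓝 (Gamma (2 - α) / (α - 1) * C)) := by
  obtain ⟨K, hK⟩ := exists_rpow_mul_measure_Ioi_le hν0 hint hα1.le htail
  have hlim := tendsto_setIntegral_mul_comp_div_nhdsGT_zero
    (integrableOn_one_sub_exp_neg_mul_rpow_neg hα1 hα2)
    ((measurable_id.pow_const α).mul (measurable_measure_Ioi ν).ennreal_toReal)
    (fun x hx => (norm_of_nonneg (mul_nonneg (rpow_nonneg (le_of_lt hx) α)
      ENNReal.toReal_nonneg)).trans_le (hK x hx)) htail
  rw [integral_one_sub_exp_neg_mul_rpow_neg hα1 hα2] at hlim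
  refine hlim.congr' ?_
  filter_upwards [self_mem_nhdsWithin] with ρ (hρ : 0 < ρ)
  exact (compensatedLaplace_div_rpow_eq hν0 hint α hρ).symm

theorem tendsto_compensatedLaplace_mul_div_rpow (hν0 : ν (Iic 0) = 0)
    (hint : Integrable (fun l : ℝ => l) ν) {α C : ℝ} (hα1 : 1 < α) (hα2 : α < 2)
    (htail : Tendsto (fun x : ℝ => x ^ α * (ν (Ioi x)).toReal) atTop (𝓝 C))
    {y : ℝ} (hy : 0 ≤ y) :
    Tendsto (fun s => compensatedLaplace ν (s * y) / s ^ α) (𝓝[>] 0)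
      (𝓝 (Gamma (2 - α) / (α - 1) * C * y ^ α)) := by
  rcases hy.eq_or_lt with rfl | hy
  · simp [compensatedLaplace, zero_rpow (by linarith : α ≠ 0)]
  have hsy : Tendsto (fun s => s * y) (𝓝[>] 0) (𝓝[>] 0) :=
    tendsto_nhdsWithin_of_tendsto_nhds_of_eventually_within _
      (((continuous_mul_const y).tendsto' 0 0 (zero_mul y)).mono_left nhdsWithin_le_nhds)
      (by filter_upwards [self_mem_nhdsWithin] with s (hs : 0 < s) using mul_pos hs hy)
  refine (((tendsto_compensatedLaplace_div_rpow hν0 hint hα1 hα2 htail).comp hsy).mul_const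
    (y ^ α)).congr' ?_
  filter_upwards [self_mem_nhdsWithin] with s (hs : 0 < s)
  have hyα : 0 < y ^ α := rpow_pos_of_pos hy α
  simp only [Function.comp, mul_rpow hs.le hy.le]
  field_simp

/-- With `ε = 1 - m t` and `s = ε ^ (1 / (α - 1))`, the linear part of `Ψ^(t)(s y)` is
`-ε s y = -s ^ α y`, which the prefactor `ε ^ (-α / (α - 1)) = s ^ (-α)` turns into `-y`. -/
lemma rpow_mul_Psi_rpow_mul_eq (hν0 : ν (Iic 0) = 0)
    (hint : Integrable (fun l : ℝ => l) ν) {α t y : ℝ} (hα : 1 < α)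
    (hε : 0 < 1 - (∫ l, l ∂ν) * t) (hy : 0 ≤ y) :
    (1 - (∫ l, l ∂ν) * t) ^ (-(α / (α - 1))) *
        Psi ν t ((1 - (∫ l, l ∂ν) * t) ^ (1 / (α - 1)) * y) =
      -y - t * (compensatedLaplace ν ((1 - (∫ l, l ∂ν) * t) ^ (1 / (α - 1)) * y) /
        ((1 - (∫ l, l ∂ν) * t) ^ (1 / (α - 1))) ^ α) := by
  set ε := 1 - (∫ l, l ∂ν) * t
  have hα' : α - 1 ≠ 0 := by linarith
  have hpow : (ε ^ (1 / (α - 1))) ^ α = ε ^ (α / (α - 1)) := by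
    rw [← rpow_mul hε.le]
    ring_nf
  have hlin : ε * ε ^ (1 / (α - 1)) = ε ^ (α / (α - 1)) := by
    rw [← rpow_one_add' hε.le (by positivity)]
    congr 1
    field_simp
    ring
  have hP : 0 < ε ^ (α / (α - 1)) := rpow_pos_of_pos hε _
  rw [Psi_eq_neg_sub_compensatedLaplace hν0 hint t (by positivity), hpow, rpow_neg hε.le,
    ← mul_assoc, hlin]
  field_simp

end Tail

theorem Psi_rescaled_limit_stable_general
    (ν : Measure ℝ) (hν0 : ν (Set.Iic 0) = 0)
    (hint : Integrable (fun l : ℝ => l) ν)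
    (m : ℝ) (hm : m = ∫ l, l ∂ν) (hmpos : 0 < m)
    (α C : ℝ) (hα1 : 1 < α) (hα2 : α < 2)
    (htail : Tendsto (fun x : ℝ => x ^ α * (ν (Set.Ioi x)).toReal)
      atTop (nhds C))
    (y : ℝ) (hy : 0 ≤ y) :
    Tendsto
      (fun t : ℝ =>
        (1 - m * t) ^ (-(α / (α - 1))) *
          Psi ν t ((1 - m * t) ^ (1 / (α - 1)) * y))
      (nhdsWithin (1 / m) (Set.Iio (1 / m)))
      (nhds (-y - (C * Real.Gamma (2 - α) / (m * (α - 1))) * y ^ α)) := by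
  have hε : Tendsto (fun t => 1 - m * t) (𝓝[<] (1 / m)) (𝓝[>] 0) := by
    refine tendsto_nhdsWithin_of_tendsto_nhds_of_eventually_within _ ?_ ?_
    · exact ((by fun_prop : Continuous fun t : ℝ => 1 - m * t).tendsto' (1 / m) 0
        (by field_simp; ring)).mono_left nhdsWithin_le_nhds
    · filter_upwards [self_mem_nhdsWithin] with t (ht : t < 1 / m)
      rw [lt_div_iff₀ hmpos] at ht
      show 0 < 1 - m * t
      linarith
  have hs := (tendsto_rpow_nhdsGT_zero (one_div_pos.2 (sub_pos.2 hα1))).comp hε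
  have hlim := tendsto_const_nhds (x := -y) |>.sub ((tendsto_id.mono_left nhdsWithin_le_nhds).mul
    ((tendsto_compensatedLaplace_mul_div_rpow hν0 hint hα1 hα2 htail hy).comp hs))
  convert hlim.congr' ?_ using 2
  · field_simp
  · filter_upwards [hε.eventually self_mem_nhdsWithin] with t (ht : 0 < 1 - m * t)
    subst hm
    exact (rpow_mul_Psi_rpow_mul_eq hν0 hint hα1 ht hy).symm

/-- Let `ν` be a measure on `(0,∞)` with finite positive mean `m` whose tail satisfies
`ν̄(x) ~ C x^{-α}` as `x → ∞`, with `α ∈ (1,2)`, `C > 0`. Then for every `y ≥ 0`,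
`lim_{t→(1/m)⁻} (1-mt)^{-α/(α-1)} Ψ^(t)((1-mt)^{1/(α-1)} y)
  = -y - (C Γ(2-α)/(m(α-1))) y^α`. -/
theorem Psi_rescaled_limit_stable
    (ν : Measure ℝ) (hν0 : ν (Set.Iic 0) = 0)
    (hint : Integrable (fun l : ℝ => l) ν)
    (m : ℝ) (hm : m = ∫ l, l ∂ν) (hmpos : 0 < m)
    (α C : ℝ) (hα1 : 1 < α) (hα2 : α < 2) (hC : 0 < C)
    (htail : Tendsto (fun x : ℝ => x ^ α * (ν (Set.Ioi x)).toReal)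
      atTop (nhds C))
    (y : ℝ) (hy : 0 ≤ y) :
    Tendsto
      (fun t : ℝ =>
        (1 - m * t) ^ (-(α / (α - 1))) *
          Psi ν t ((1 - m * t) ^ (1 / (α - 1)) * y))
      (nhdsWithin (1 / m) (Set.Iio (1 / m)))
      (nhds (-y - (C * Real.Gamma (2 - α) / (m * (α - 1))) * y ^ α)) :=
  Psi_rescaled_limit_stable_general ν hν0 hint m hm hmpos α C hα1 hα2 htail y hy
end
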